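/- arXiv:1808.08467 — 4 statements merged into one kernel-verified Lean document; each statement's English description precedes it below -/
import Mathlib

section
/- Let K₁, K₂, p∞₁, p∞₂, pⁿ, F₁, F₂, r₁, r₂, v₁, v₂ be real numbers, let α₁ ∈ (0,1) and set α₂ = 1 − α₁, E_j = F_j − pⁿ·α_j, ρ_j = r_j/α_j, and p_j = (K_j − 1)·(E_j/α_j − ρ_j·v_j²/2) − K_j·p∞_j for j = 1,2. Then p₁ = p₂ if and only if A·α₁² + B·α₁ + C = 0, where A = (K₁−1)pⁿ + K₁p∞₁ − (K₂−1)pⁿ − K₂p∞₂, B = −(K₁−1)F₁ − (K₂−1)F₂ − K₁p∞₁ + K₂p∞₂ + (1/2)(K₁−1)r₁v₁² + (1/2)(K₂−1)r₂v₂² + (K₂−K₁)pⁿ, and C = (K₁−1)F₁ − (1/2)(K₁−1)r₁v₁². -/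
/-!
Multiplying the stiffened-gas law by `α_j` clears the denominators `α_j` and leaves a pressure
that is affine in `α_j`: `α_j p_j = a_j - b_j α_j`. Hence `(p₁ - p₂) α₁ α₂` is a quadratic
polynomial in `α₁` (after `α₂ = 1 - α₁`), namely `A α₁² + B α₁ + C`, and since `α₁ α₂ ≠ 0`
for `α₁ ∈ (0, 1)` it vanishes exactly when `p₁ = p₂`.
-/

theorem mul_stiffenedGas_pressure {𝕜 : Type*} [Field 𝕜] {K pinf pn F r v α E ρ p : 𝕜}
    (hα : α ≠ 0) (hE : E = F - pn * α) (hρ : ρ = r / α)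
    (hp : p = (K - 1) * (E / α - ρ * v ^ 2 / 2) - K * pinf) :
    α * p = (K - 1) * (F - r * v ^ 2 / 2) - ((K - 1) * pn + K * pinf) * α := by
  subst hE hρ hp
  field_simp
  ring

theorem sub_mul_mul_eq_quadratic_of_mul_eq_affine {R : Type*} [CommRing R]
    {p₁ p₂ α₁ α₂ a₁ a₂ b₁ b₂ : R}
    (h₁ : α₁ * p₁ = a₁ - b₁ * α₁) (h₂ : α₂ * p₂ = a₂ - b₂ * α₂) (hα₂ : α₂ = 1 - α₁) :
    (p₁ - p₂) * (α₁ * α₂) = (b₁ - b₂) * α₁ ^ 2 + (b₂ - b₁ - a₁ - a₂) * α₁ + a₁ := by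
  linear_combination α₂ * h₁ - α₁ * h₂ + (a₁ + (b₂ - b₁) * α₁) * hα₂

/-- In the third step of the scheme for the one-pressure two-fluid model,
the equal-pressure condition `p₁ = p₂` is equivalent to the quadratic
equation `A·α₁² + B·α₁ + C = 0` with the coefficients (39)–(41). -/
theorem pressure_equality_iff_quadratic
    (K₁ K₂ pinf₁ pinf₂ pn F₁ F₂ r₁ r₂ v₁ v₂ : ℝ)
    (α₁ : ℝ) (hα₁ : α₁ ∈ Set.Ioo (0 : ℝ) 1)
    (α₂ E₁ E₂ ρ₁ ρ₂ p₁ p₂ A B C : ℝ)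
    (hα₂ : α₂ = 1 - α₁)
    (hE₁ : E₁ = F₁ - pn * α₁) (hE₂ : E₂ = F₂ - pn * α₂)
    (hρ₁ : ρ₁ = r₁ / α₁) (hρ₂ : ρ₂ = r₂ / α₂)
    (hp₁ : p₁ = (K₁ - 1) * (E₁ / α₁ - ρ₁ * v₁ ^ 2 / 2) - K₁ * pinf₁)
    (hp₂ : p₂ = (K₂ - 1) * (E₂ / α₂ - ρ₂ * v₂ ^ 2 / 2) - K₂ * pinf₂)
    (hA : A = (K₁ - 1) * pn + K₁ * pinf₁ - (K₂ - 1) * pn - K₂ * pinf₂)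
    (hB : B = -(K₁ - 1) * F₁ - (K₂ - 1) * F₂ - K₁ * pinf₁ + K₂ * pinf₂
      + (1 / 2) * (K₁ - 1) * r₁ * v₁ ^ 2 + (1 / 2) * (K₂ - 1) * r₂ * v₂ ^ 2
      + (K₂ - K₁) * pn)
    (hC : C = (K₁ - 1) * F₁ - (1 / 2) * (K₁ - 1) * r₁ * v₁ ^ 2) :
    p₁ = p₂ ↔ A * α₁ ^ 2 + B * α₁ + C = 0 := by
  obtain ⟨hα₁_pos, hα₁_lt_one⟩ := hα₁
  have hα₁_ne : α₁ ≠ 0 := hα₁_pos.ne'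
  have hα₂_ne : α₂ ≠ 0 := hα₂ ▸ sub_ne_zero.2 hα₁_lt_one.ne'
  have h₁ := mul_stiffenedGas_pressure hα₁_ne hE₁ hρ₁ hp₁
  have h₂ := mul_stiffenedGas_pressure hα₂_ne hE₂ hρ₂ hp₂
  have key : (p₁ - p₂) * (α₁ * α₂) = A * α₁ ^ 2 + B * α₁ + C := by
    rw [sub_mul_mul_eq_quadratic_of_mul_eq_affine h₁ h₂ hα₂, hA, hB, hC]
    ring
  rw [← key, mul_eq_zero_iff_right (mul_ne_zero hα₁_ne hα₂_ne), sub_eq_zero]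
end

section
/- Let K₁ > 1, K₂ > 1 and let p∞₁, p∞₂, pⁿ, F₁, F₂, r₁, r₂, v₁, v₂ be real numbers satisfying F₁ > (1/2)r₁v₁² and F₂ > (1/2)r₂v₂². Define A = (K₁−1)pⁿ + K₁p∞₁ − (K₂−1)pⁿ − K₂p∞₂, B = −(K₁−1)F₁ − (K₂−1)F₂ − K₁p∞₁ + K₂p∞₂ + (1/2)(K₁−1)r₁v₁² + (1/2)(K₂−1)r₂v₂² + (K₂−K₁)pⁿ, C = (K₁−1)F₁ − (1/2)(K₁−1)r₁v₁², and Q(X) = A·X² + B·X + C. Then Q(0) = (K₁−1)(F₁ − (1/2)r₁v₁²) > 0, Q(1) = −(K₂−1)(F₂ − (1/2)r₂v₂²) < 0, and Q has exactly one root in the open interval (0,1). -/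
open Set

theorem quadratic_eq_mul_sub_mul_sub_of_roots {K : Type*} [Field K] {a b c x y : K}
    (hxy : x ≠ y) (hx : a * x ^ 2 + b * x + c = 0) (hy : a * y ^ 2 + b * y + c = 0) (t : K) :
    a * t ^ 2 + b * t + c = a * ((t - x) * (t - y)) := by
  have hsum : a * (x + y) + b = 0 := by
    have : (y - x) * (a * (x + y) + b) = 0 := by linear_combination hy - hx
    exact (mul_eq_zero.mp this).resolve_left (sub_ne_zero.mpr hxy.symm)
  linear_combination hx + (t - x) * hsum

/-- Two roots `x ≠ y` in `(0, 1)` would make the quadratic equal to `a * ((t - x) * (t - y))`,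
which has the sign of `a` at both `t = 0` and `t = 1`. -/
theorem existsUnique_quadratic_root_mem_Ioo {a b c : ℝ} (h0 : 0 < c) (h1 : a + b + c < 0) :
    ∃! x : ℝ, x ∈ Ioo (0 : ℝ) 1 ∧ a * x ^ 2 + b * x + c = 0 := by
  have hcont : ContinuousOn (fun x : ℝ => a * x ^ 2 + b * x + c) (Icc 0 1) := by fun_prop
  obtain ⟨x, hx, hroot⟩ :=
    intermediate_value_Ioo' zero_le_one hcont ⟨by simpa using h1, by simpa using h0⟩
  refine ⟨x, ⟨hx, hroot⟩, fun y ⟨hy, hyroot⟩ => ?_⟩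
  by_contra hyx
  have hfac := quadratic_eq_mul_sub_mul_sub_of_roots hyx hyroot hroot
  have ha_pos : 0 < a := by
    have := hfac 0
    nlinarith [mul_pos hx.1 hy.1]
  have ha_neg : a < 0 := by
    have := hfac 1
    nlinarith [mul_pos (sub_pos.mpr hx.2) (sub_pos.mpr hy.2)]
  exact ha_neg.not_gt ha_pos

/-- Well-posedness of the third step of the scheme: under positivity of the
non-kinetic parts of the energies, the quadratic `Q` with coefficients
(39)–(41) satisfies `Q(0) > 0`, `Q(1) < 0`, and has exactly one root in
the open interval `(0,1)`. -/
theorem quadratic_unique_root_in_unit_interval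
    (K₁ K₂ pinf₁ pinf₂ pn F₁ F₂ r₁ r₂ v₁ v₂ : ℝ)
    (hK₁ : 1 < K₁) (hK₂ : 1 < K₂)
    (hF₁ : (1 / 2) * r₁ * v₁ ^ 2 < F₁) (hF₂ : (1 / 2) * r₂ * v₂ ^ 2 < F₂)
    (A B C : ℝ) (Q : ℝ → ℝ)
    (hA : A = (K₁ - 1) * pn + K₁ * pinf₁ - (K₂ - 1) * pn - K₂ * pinf₂)
    (hB : B = -(K₁ - 1) * F₁ - (K₂ - 1) * F₂ - K₁ * pinf₁ + K₂ * pinf₂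
      + (1 / 2) * (K₁ - 1) * r₁ * v₁ ^ 2 + (1 / 2) * (K₂ - 1) * r₂ * v₂ ^ 2
      + (K₂ - K₁) * pn)
    (hC : C = (K₁ - 1) * F₁ - (1 / 2) * (K₁ - 1) * r₁ * v₁ ^ 2)
    (hQ : ∀ X, Q X = A * X ^ 2 + B * X + C) :
    Q 0 = (K₁ - 1) * (F₁ - (1 / 2) * r₁ * v₁ ^ 2) ∧ 0 < Q 0 ∧
    Q 1 = -(K₂ - 1) * (F₂ - (1 / 2) * r₂ * v₂ ^ 2) ∧ Q 1 < 0 ∧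
    (∃! x : ℝ, x ∈ Set.Ioo (0 : ℝ) 1 ∧ Q x = 0) := by
  have hQ0 : Q 0 = (K₁ - 1) * (F₁ - (1 / 2) * r₁ * v₁ ^ 2) := by rw [hQ, hC]; ring
  have hQ1 : Q 1 = -(K₂ - 1) * (F₂ - (1 / 2) * r₂ * v₂ ^ 2) := by rw [hQ, hA, hB, hC]; ring
  have hpos : 0 < Q 0 := hQ0 ▸ mul_pos (by linarith) (by linarith)
  have hneg : Q 1 < 0 := by
    rw [hQ1, neg_mul]
    exact neg_neg_of_pos (mul_pos (by linarith) (by linarith))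
  refine ⟨hQ0, hpos, hQ1, hneg, ?_⟩
  simp only [hQ] at hpos hneg ⊢
  exact existsUnique_quadratic_root_mem_Ioo (by simpa using hpos) (by simpa using hneg)
end

section
/- Let K₁, K₂, p∞₁, p∞₂, E₁, E₂, r₁, r₂, v₁, v₂ be real numbers, let α₁ ∈ (0,1) and set α₂ = 1 − α₁, ρ_j = r_j/α_j, and p_j = (K_j − 1)·(E_j/α_j − ρ_j·v_j²/2) − K_j·p∞_j for j = 1,2. Then p₁ = p₂ if and only if A·α₁² + B·α₁ + C = 0, where A = K₁p∞₁ − K₂p∞₂, B = −(K₁−1)E₁ − (K₂−1)E₂ − K₁p∞₁ + K₂p∞₂ + (1/2)(K₁−1)r₁v₁² + (1/2)(K₂−1)r₂v₂², and C = (K₁−1)E₁ − (1/2)(K₁−1)r₁v₁². -/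
/-!
Multiplying `p₁ - p₂` by the nonzero factor `α₁ α₂ = α₁ (1 - α₁)` clears both denominators:
each `α_j p_j` is affine in `α_j`, so `α₁ α₂ (p₁ - p₂)` is a quadratic polynomial in `α₁`,
and expanding it gives exactly `A α₁² + B α₁ + C`.
-/

noncomputable def stiffenedGasPressure (K pinf E r v α : ℝ) : ℝ :=
  (K - 1) * (E / α - r / α * v ^ 2 / 2) - K * pinf

lemma mul_stiffenedGasPressure (K pinf E r v : ℝ) {α : ℝ} (hα : α ≠ 0) :
    α * stiffenedGasPressure K pinf E r v α = (K - 1) * (E - r * v ^ 2 / 2) - K * pinf * α := by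
  unfold stiffenedGasPressure
  field_simp

lemma mul_sub_stiffenedGasPressure (K₁ K₂ pinf₁ pinf₂ E₁ E₂ r₁ r₂ v₁ v₂ : ℝ) {α : ℝ}
    (hα : α ≠ 0) (hα' : 1 - α ≠ 0) :
    α * (1 - α) * (stiffenedGasPressure K₁ pinf₁ E₁ r₁ v₁ α
        - stiffenedGasPressure K₂ pinf₂ E₂ r₂ v₂ (1 - α)) =
      (K₁ * pinf₁ - K₂ * pinf₂) * α ^ 2
        + (-(K₁ - 1) * E₁ - (K₂ - 1) * E₂ - K₁ * pinf₁ + K₂ * pinf₂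
          + (1 / 2) * (K₁ - 1) * r₁ * v₁ ^ 2 + (1 / 2) * (K₂ - 1) * r₂ * v₂ ^ 2) * α
        + ((K₁ - 1) * E₁ - (1 / 2) * (K₁ - 1) * r₁ * v₁ ^ 2) := by
  calc α * (1 - α) * (stiffenedGasPressure K₁ pinf₁ E₁ r₁ v₁ α
        - stiffenedGasPressure K₂ pinf₂ E₂ r₂ v₂ (1 - α))
      = (1 - α) * (α * stiffenedGasPressure K₁ pinf₁ E₁ r₁ v₁ α)
          - α * ((1 - α) * stiffenedGasPressure K₂ pinf₂ E₂ r₂ v₂ (1 - α)) := by ring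
    _ = _ := by
      rw [mul_stiffenedGasPressure _ _ _ _ _ hα, mul_stiffenedGasPressure _ _ _ _ _ hα']
      ring

/-- In the scheme for the two-fluid system solved in time derivatives, the
equal-pressure condition `p₁ = p₂` is equivalent to the quadratic equation
`A·α₁² + B·α₁ + C = 0` with the coefficients (55)–(57). -/
theorem pressure_equality_iff_quadratic_solved
    (K₁ K₂ pinf₁ pinf₂ E₁ E₂ r₁ r₂ v₁ v₂ : ℝ)
    (α₁ : ℝ) (hα₁ : α₁ ∈ Set.Ioo (0 : ℝ) 1)
    (α₂ ρ₁ ρ₂ p₁ p₂ A B C : ℝ)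
    (hα₂ : α₂ = 1 - α₁)
    (hρ₁ : ρ₁ = r₁ / α₁) (hρ₂ : ρ₂ = r₂ / α₂)
    (hp₁ : p₁ = (K₁ - 1) * (E₁ / α₁ - ρ₁ * v₁ ^ 2 / 2) - K₁ * pinf₁)
    (hp₂ : p₂ = (K₂ - 1) * (E₂ / α₂ - ρ₂ * v₂ ^ 2 / 2) - K₂ * pinf₂)
    (hA : A = K₁ * pinf₁ - K₂ * pinf₂)
    (hB : B = -(K₁ - 1) * E₁ - (K₂ - 1) * E₂ - K₁ * pinf₁ + K₂ * pinf₂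
      + (1 / 2) * (K₁ - 1) * r₁ * v₁ ^ 2 + (1 / 2) * (K₂ - 1) * r₂ * v₂ ^ 2)
    (hC : C = (K₁ - 1) * E₁ - (1 / 2) * (K₁ - 1) * r₁ * v₁ ^ 2) :
    p₁ = p₂ ↔ A * α₁ ^ 2 + B * α₁ + C = 0 := by
  obtain ⟨hα₁_pos, hα₁_lt_one⟩ := hα₁
  have hα₁_ne : α₁ ≠ 0 := hα₁_pos.ne'
  have hα₂_ne : 1 - α₁ ≠ 0 := sub_ne_zero.2 hα₁_lt_one.ne'
  subst hα₂ hρ₁ hρ₂ hp₁ hp₂ hA hB hC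
  rw [← mul_sub_stiffenedGasPressure _ _ _ _ _ _ _ _ _ _ hα₁_ne hα₂_ne,
    mul_eq_zero_iff_left (mul_ne_zero hα₁_ne hα₂_ne), sub_eq_zero]
  rfl
end

section
/- Let K₁ > 1, K₂ > 1 and let p∞₁, p∞₂, E₁, E₂, r₁, r₂, v₁, v₂ be real numbers satisfying E₁ > (1/2)r₁v₁² and E₂ > (1/2)r₂v₂². Define A = K₁p∞₁ − K₂p∞₂, B = −(K₁−1)E₁ − (K₂−1)E₂ − K₁p∞₁ + K₂p∞₂ + (1/2)(K₁−1)r₁v₁² + (1/2)(K₂−1)r₂v₂², C = (K₁−1)E₁ − (1/2)(K₁−1)r₁v₁², and Q(X) = A·X² + B·X + C. Then Q(0) = (K₁−1)(E₁ − (1/2)r₁v₁²) > 0, Q(1) = −(K₂−1)(E₂ − (1/2)r₂v₂²) < 0, and Q has exactly one root in the open interval (0,1). -/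
/-!
`Q 0 > 0 > Q 1`, so `Q` has a root in `(0,1)` by the intermediate value theorem.
Two distinct roots `x, y` would factor `Q t = A (t - x) (t - y)`, and for `x, y ∈ (0,1)` this gives
`Q 0 * Q 1 = A² x y (1 - x) (1 - y) ≥ 0`, contradicting the sign change.
-/

open Set

lemma quadratic_eq_mul_sub_mul_sub {a b c x y : ℝ} (hxy : x ≠ y)
    (hx : a * x ^ 2 + b * x + c = 0) (hy : a * y ^ 2 + b * y + c = 0) (t : ℝ) :
    a * t ^ 2 + b * t + c = a * (t - x) * (t - y) := by
  have hsum : a * (x + y) + b = 0 := by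
    have hfac : (x - y) * (a * (x + y) + b) = 0 := by linear_combination hx - hy
    exact (mul_eq_zero.mp hfac).resolve_left (sub_ne_zero.mpr hxy)
  linear_combination (t - x) * hsum + hx

lemma quadratic_existsUnique_root_Ioo {a b c u v : ℝ} (huv : u ≤ v)
    (hu : 0 < a * u ^ 2 + b * u + c) (hv : a * v ^ 2 + b * v + c < 0) :
    ∃! x, x ∈ Ioo u v ∧ a * x ^ 2 + b * x + c = 0 := by
  have hcont : ContinuousOn (fun x => a * x ^ 2 + b * x + c) (Icc u v) := by fun_prop
  obtain ⟨x, hx, hx0⟩ := intermediate_value_Ioo' huv hcont ⟨hv, hu⟩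
  refine ⟨x, ⟨hx, hx0⟩, fun y ⟨hy, hy0⟩ => ?_⟩
  by_contra hyx
  have hfac := quadratic_eq_mul_sub_mul_sub hyx hy0 hx0
  have hsign : 0 ≤ (a * u ^ 2 + b * u + c) * (a * v ^ 2 + b * v + c) := by
    rw [hfac u, hfac v]
    have hy' : (u - y) * (v - y) < 0 := mul_neg_of_neg_of_pos (by linarith [hy.1]) (by linarith [hy.2])
    have hx' : (u - x) * (v - x) < 0 := mul_neg_of_neg_of_pos (by linarith [hx.1]) (by linarith [hx.2])
    calc (0 : ℝ) ≤ a ^ 2 * (((u - y) * (v - y)) * ((u - x) * (v - x))) :=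
          mul_nonneg (sq_nonneg a) (mul_pos_of_neg_of_neg hy' hx').le
      _ = a * (u - y) * (u - x) * (a * (v - y) * (v - x)) := by ring
  exact (mul_neg_of_pos_of_neg hu hv).not_ge hsign

/-- Well-posedness of the third step of the scheme for the system solved in
time derivatives: under positivity of the internal energies, the quadratic
`Q` with coefficients (55)–(57) satisfies `Q(0) > 0`, `Q(1) < 0`, and has
exactly one root in the open interval `(0,1)`. -/
theorem quadratic_unique_root_in_unit_interval_solved
    (K₁ K₂ pinf₁ pinf₂ E₁ E₂ r₁ r₂ v₁ v₂ : ℝ)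
    (hK₁ : 1 < K₁) (hK₂ : 1 < K₂)
    (hE₁ : (1 / 2) * r₁ * v₁ ^ 2 < E₁) (hE₂ : (1 / 2) * r₂ * v₂ ^ 2 < E₂)
    (A B C : ℝ) (Q : ℝ → ℝ)
    (hA : A = K₁ * pinf₁ - K₂ * pinf₂)
    (hB : B = -(K₁ - 1) * E₁ - (K₂ - 1) * E₂ - K₁ * pinf₁ + K₂ * pinf₂
      + (1 / 2) * (K₁ - 1) * r₁ * v₁ ^ 2 + (1 / 2) * (K₂ - 1) * r₂ * v₂ ^ 2)
    (hC : C = (K₁ - 1) * E₁ - (1 / 2) * (K₁ - 1) * r₁ * v₁ ^ 2)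
    (hQ : ∀ X, Q X = A * X ^ 2 + B * X + C) :
    Q 0 = (K₁ - 1) * (E₁ - (1 / 2) * r₁ * v₁ ^ 2) ∧ 0 < Q 0 ∧
    Q 1 = -(K₂ - 1) * (E₂ - (1 / 2) * r₂ * v₂ ^ 2) ∧ Q 1 < 0 ∧
    (∃! x : ℝ, x ∈ Set.Ioo (0 : ℝ) 1 ∧ Q x = 0) := by
  have hQ0 : Q 0 = (K₁ - 1) * (E₁ - (1 / 2) * r₁ * v₁ ^ 2) := by rw [hQ, hC]; ring
  have hQ1 : Q 1 = -(K₂ - 1) * (E₂ - (1 / 2) * r₂ * v₂ ^ 2) := by rw [hQ, hA, hB, hC]; ring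
  have hpos : 0 < Q 0 := hQ0 ▸ mul_pos (sub_pos.mpr hK₁) (sub_pos.mpr hE₁)
  have hneg : Q 1 < 0 := by
    rw [hQ1, neg_mul]
    exact neg_neg_of_pos (mul_pos (sub_pos.mpr hK₂) (sub_pos.mpr hE₂))
  refine ⟨hQ0, hpos, hQ1, hneg, ?_⟩
  obtain rfl : Q = fun X => A * X ^ 2 + B * X + C := funext hQ
  exact quadratic_existsUnique_root_Ioo zero_le_one hpos hneg
end
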